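/- A finite semidistributive lattice contains no C-cycle of length two: there do not exist join-irreducibles p₁, p₂ with p₁ C p₂ and p₂ C p₁, where x C y means x A y or x B y. -/
import Mathlib


open Classical in
/-- The join of all elements strictly below `x`; for join-irreducible `x` in a
finite lattice this is the unique lower cover `x_*`. -/
noncomputable def lowerStar {L : Type*} [Lattice L] [Fintype L] [BoundedOrder L] (x : L) : L :=
  (Finset.univ.filter (fun y : L => y < x)).sup id

open Classical in
/-- `κ(x) = ⋁ {y | y ⊓ x = x_*}`. -/
noncomputable def kappa {L : Type*} [Lattice L] [Fintype L] [BoundedOrder L] (x : L) : L :=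
  (Finset.univ.filter (fun y : L => y ⊓ x = lowerStar x)).sup id

open Classical in
/-- `κ(x)^*`, the unique upper cover of the meet-irreducible `κ(x)`, realized as
the meet of all elements strictly above `κ(x)`. -/
noncomputable def kappaStar {L : Type*} [Lattice L] [Fintype L] [BoundedOrder L] (x : L) : L :=
  (Finset.univ.filter (fun y : L => kappa x < y)).inf id


lemma lowerStar_le' {L : Type*} [Lattice L] [Fintype L] [BoundedOrder L] (x : L) :
    lowerStar x ≤ x := by
  classical
  refine Finset.sup_le fun y hy => ?_
  simp only [Finset.mem_filter] at hy
  exact le_of_lt hy.2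

lemma le_lowerStar' {L : Type*} [Lattice L] [Fintype L] [BoundedOrder L] {x y : L}
    (h : y < x) : y ≤ lowerStar x := by
  classical
  exact Finset.le_sup (f := id) (by simp [h])

theorem stmt13 {L : Type*} [Lattice L] [Fintype L] [BoundedOrder L]
    (hSDj : ∀ a b c : L, a ⊔ b = a ⊔ c → a ⊔ b = a ⊔ (b ⊓ c))
    (hSDm : ∀ a b c : L, a ⊓ b = a ⊓ c → a ⊓ b = a ⊓ (b ⊔ c)) :
    ¬ ∃ p q : L, SupIrred p ∧ SupIrred q ∧
      ((q < p ∧ p ≤ kappaStar q) ∨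
        (¬ p ≤ q ∧ p ≤ lowerStar p ⊔ q ∧ ¬ p ≤ lowerStar p ⊔ lowerStar q)) ∧
      ((p < q ∧ q ≤ kappaStar p) ∨
        (¬ q ≤ p ∧ q ≤ lowerStar q ⊔ p ∧ ¬ q ≤ lowerStar q ⊔ lowerStar p)) := by
  rintro ⟨p, q, hp, hq, hpq, hqp⟩
  rcases hpq with ⟨hlt, -⟩ | ⟨hnle, h1, h2⟩
  · rcases hqp with ⟨hlt', -⟩ | ⟨hnle', -, -⟩
    · exact lt_asymm hlt hlt'
    · exact hnle' hlt.le
  · rcases hqp with ⟨hlt', -⟩ | ⟨hnle', h1', h2'⟩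
    · exact hnle hlt'.le
    · set a := lowerStar p ⊔ lowerStar q with ha
      have hap : a ⊔ p = p ⊔ q := by
        apply le_antisymm
        · exact sup_le (sup_le ((lowerStar_le' p).trans le_sup_left)
            ((lowerStar_le' q).trans le_sup_right)) le_sup_left
        · refine sup_le (le_sup_right) ?_
          calc q ≤ lowerStar q ⊔ p := h1'
          _ ≤ a ⊔ p := sup_le (le_sup_right.trans le_sup_left) le_sup_right
      have haq : a ⊔ q = p ⊔ q := by
        apply le_antisymm
        · exact sup_le (sup_le ((lowerStar_le' p).trans le_sup_left)
            ((lowerStar_le' q).trans le_sup_right)) le_sup_right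
        · refine sup_le ?_ (le_sup_right)
          calc p ≤ lowerStar p ⊔ q := h1
          _ ≤ a ⊔ q := sup_le (le_sup_left.trans le_sup_left) le_sup_right
      have key := hSDj a p q (hap.trans haq.symm)
      have hmeet : p ⊓ q ≤ lowerStar p :=
        le_lowerStar' (lt_of_le_of_ne inf_le_left fun h => hnle (h ▸ inf_le_right))
      have : p ≤ a := by
        have hpa : p ≤ a ⊔ (p ⊓ q) := key ▸ le_sup_right
        have : a ⊔ (p ⊓ q) = a := sup_eq_left.2 (hmeet.trans le_sup_left)
        exact this ▸ hpa
      exact h2 this
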